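/- Let p = (p_1,...,p_n) with p_1 ∈ [0,1], p^{(1)} = (0, p_2,...,p_n), and deterministic nondecreasing critical values 0 < α_{1:n} ≤ ... ≤ α_{n:n} < 1. With R the step-up count (R = max{i : p_{i:n} ≤ α_{i:n}}, max∅ = 0), one has ∫_0^1 [1{p_1 ≤ α_{R(p_1, p_2,...,p_n):n}} / R(p_1, p_2,...,p_n)] dp_1 = α_{R(p^{(1)}):n} / R(p^{(1)}). -/

import Mathlib

open MeasureTheory ProbabilityTheory Finset
open scoped Classical

/-- number of p-values `≤ t`. -/
noncomputable def countLe {n : ℕ} (p : Fin n → ℝ) (t : ℝ) : ℕ :=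
  (Finset.univ.filter fun i => p i ≤ t).card

/-- step-up rejection count: `c i` is the `(i+1)`-th critical value; for nondecreasing
critical values this equals `max {k : p_{k:n} ≤ c_{k:n}}` (with `max ∅ = 0`). -/
noncomputable def suCount {n : ℕ} (c : Fin n → ℝ) (p : Fin n → ℝ) : ℕ :=
  (Finset.univ.filter fun k : Fin n => k.1 + 1 ≤ countLe p (c k)).sup fun k => k.1 + 1

/-- step-down rejection count. -/
noncomputable def sdCount {n : ℕ} (c : Fin n → ℝ) (p : Fin n → ℝ) : ℕ :=
  (Finset.univ.filter fun k : Fin n =>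
    ∀ j : Fin n, j ≤ k → j.1 + 1 ≤ countLe p (c j)).sup fun k => k.1 + 1

/-- the critical value `c_{R:n}`, with the convention `c_{0:n} = 0`. -/
noncomputable def threshold {n : ℕ} (c : Fin n → ℝ) (R : ℕ) : ℝ :=
  if h : 0 < R ∧ R ≤ n then c ⟨R - 1, by omega⟩ else 0

/-- the σ-algebra generated by `(F̂_n(t))_{t ≥ λ}`. -/
noncomputable def ecdfSigma {Ω : Type*} [MeasurableSpace Ω] {n : ℕ}
    (p : Fin n → Ω → ℝ) (lam : ℝ) : MeasurableSpace Ω :=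
  MeasurableSpace.comap
    (fun ω => fun t : Set.Ici lam => (countLe (fun i => p i ω) (t : ℝ) : ℝ))
    MeasurableSpace.pi

/-!
Let `R₀ = R(p⁽¹⁾)` and `t₀ = α_{R₀:n}`. Raising `p₁` can only lower the step-up count. For
`p₁ ≤ t₀` it does not change it at all: the index `R₀` still satisfies `p_{R₀:n} ≤ α_{R₀:n}`,
because `p₁` is counted below `α_{R₀:n}` either way. For `p₁ > t₀` the new count `R ≤ R₀` has
`α_{R:n} ≤ t₀ < p₁`, so the indicator vanishes. The integrand is therefore
`1{p₁ ≤ t₀} / R₀`, also when `R₀ = 0`, where both sides vanish because `x / 0 = 0`.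
-/

section Threshold

variable {n : ℕ} {c : Fin n → ℝ}

lemma threshold_succ (c : Fin n → ℝ) (k : Fin n) : threshold c (k.1 + 1) = c k := by
  rw [threshold, dif_pos ⟨k.1.succ_pos, k.2⟩]
  rfl

lemma threshold_nonneg (hc : ∀ k, 0 ≤ c k) (R : ℕ) : 0 ≤ threshold c R := by
  unfold threshold
  split_ifs
  exacts [hc _, le_rfl]

lemma threshold_le_one (hc : ∀ k, c k ≤ 1) (R : ℕ) : threshold c R ≤ 1 := by
  unfold threshold
  split_ifs
  exacts [hc _, zero_le_one]

lemma threshold_le_threshold (hmono : Monotone c) (hc : ∀ k, 0 ≤ c k) {R S : ℕ}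
    (hRS : R ≤ S) (hS : S ≤ n) : threshold c R ≤ threshold c S := by
  rcases Nat.eq_zero_or_pos R with rfl | hR
  · exact (threshold_nonneg hc S).trans' (by simp [threshold])
  · rw [threshold, threshold, dif_pos ⟨hR, hRS.trans hS⟩, dif_pos ⟨hR.trans_le hRS, hS⟩]
    exact hmono (Fin.mk_le_mk.2 (by omega))

end Threshold

section StepUp

variable {n : ℕ}

lemma countLe_anti {p q : Fin n → ℝ} (hpq : p ≤ q) (t : ℝ) : countLe q t ≤ countLe p t :=
  card_le_card fun i hi => by
    simp only [mem_filter, mem_univ, true_and] at hi ⊢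
    exact (hpq i).trans hi

lemma countLe_update_of_le (p : Fin n → ℝ) (i : Fin n) {u t : ℝ} (hp : p i ≤ t) (hu : u ≤ t) :
    countLe (Function.update p i u) t = countLe p t := by
  unfold countLe
  congr 1
  refine filter_congr fun j _ => ?_
  rcases eq_or_ne j i with rfl | hj
  · simp [hp, hu]
  · simp [Function.update_of_ne hj]

lemma suCount_le (c p : Fin n → ℝ) : suCount c p ≤ n :=
  Finset.sup_le fun k _ => k.2

lemma le_suCount {c p : Fin n → ℝ} (k : Fin n) (hk : k.1 + 1 ≤ countLe p (c k)) :
    k.1 + 1 ≤ suCount c p :=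
  le_sup (f := fun k : Fin n => k.1 + 1) (by simpa using hk)

lemma exists_suCount_eq {c p : Fin n → ℝ} (hR : 0 < suCount c p) :
    ∃ k : Fin n, k.1 + 1 = suCount c p ∧ k.1 + 1 ≤ countLe p (c k) := by
  have hne : (univ.filter fun k : Fin n => k.1 + 1 ≤ countLe p (c k)).Nonempty := by
    rw [nonempty_iff_ne_empty]
    intro h
    rw [suCount, h, sup_empty] at hR
    exact hR.false
  obtain ⟨k, hk, hsup⟩ := exists_mem_eq_sup _ hne fun k : Fin n => k.1 + 1
  exact ⟨k, hsup.symm, by simpa using hk⟩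

lemma suCount_anti (c : Fin n → ℝ) {p q : Fin n → ℝ} (hpq : p ≤ q) :
    suCount c q ≤ suCount c p :=
  sup_mono fun k hk => by
    simp only [mem_filter, mem_univ, true_and] at hk ⊢
    exact hk.trans (countLe_anti hpq _)

lemma suCount_update_le (c p : Fin n → ℝ) (i : Fin n) {u : ℝ} (hu : p i ≤ u) :
    suCount c (Function.update p i u) ≤ suCount c p :=
  suCount_anti c (le_update_iff.2 ⟨hu, fun _ _ => le_rfl⟩)

lemma suCount_update_eq {c : Fin n → ℝ} (p : Fin n → ℝ) (i : Fin n) {u : ℝ} (hu : p i ≤ u)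
    (hut : u ≤ threshold c (suCount c p)) :
    suCount c (Function.update p i u) = suCount c p := by
  refine (suCount_update_le c p i hu).antisymm ?_
  rcases Nat.eq_zero_or_pos (suCount c p) with h0 | hpos
  · exact h0.symm ▸ Nat.zero_le _
  obtain ⟨k, hkR, hk⟩ := exists_suCount_eq hpos
  rw [← hkR, threshold_succ] at hut
  rw [← hkR]
  exact le_suCount k (by rwa [countLe_update_of_le p i (hu.trans hut) hut])

lemma suCount_update_integrand_eq {c : Fin n → ℝ} (hmono : Monotone c) (hc : ∀ k, 0 ≤ c k)
    (p : Fin n → ℝ) (i : Fin n) {u : ℝ} (hu : p i ≤ u) :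
    (if u ≤ threshold c (suCount c (Function.update p i u)) then (1 : ℝ) else 0)
        / (suCount c (Function.update p i u) : ℝ)
      = (Set.Iic (threshold c (suCount c p))).indicator (fun _ => (suCount c p : ℝ)⁻¹) u := by
  by_cases hut : u ≤ threshold c (suCount c p)
  · simp [suCount_update_eq p i hu hut, hut]
  · have hthr : threshold c (suCount c (Function.update p i u)) ≤ threshold c (suCount c p) :=
      threshold_le_threshold hmono hc (suCount_update_le c p i hu) (suCount_le c p)
    have hnot : ¬ u ≤ threshold c (suCount c (Function.update p i u)) :=
      fun h => hut (h.trans hthr)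
    simp [hut, hnot]

end StepUp

lemma setIntegral_Icc_indicator_Iic_const {t : ℝ} (ht0 : 0 ≤ t) (ht1 : t ≤ 1) (a : ℝ) :
    ∫ u in Set.Icc (0 : ℝ) 1, (Set.Iic t).indicator (fun _ => a) u = t * a := by
  have hinter : Set.Icc (0 : ℝ) 1 ∩ Set.Iic t = Set.Icc 0 t := by
    ext u
    simp only [Set.mem_inter_iff, Set.mem_Icc, Set.mem_Iic]
    constructor
    · rintro ⟨⟨hu0, _⟩, hut⟩
      exact ⟨hu0, hut⟩
    · rintro ⟨hu0, hut⟩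
      exact ⟨⟨hu0, hut.trans ht1⟩, hut⟩
  rw [setIntegral_indicator measurableSet_Iic, hinter, setIntegral_const, measureReal_def,
    Real.volume_Icc, sub_zero, ENNReal.toReal_ofReal ht0, smul_eq_mul]

theorem stepUp_leave_one_out_integral_general {m : ℕ} (c : Fin (m + 1) → ℝ) (hmono : Monotone c)
    (hc0 : 0 < c 0) (hc1 : c (Fin.last m) < 1)
    (p : Fin (m + 1) → ℝ) :
    ∫ u in Set.Icc (0 : ℝ) 1,
        (if u ≤ threshold c (suCount c (Function.update p 0 u)) then (1 : ℝ) else 0)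
          / (suCount c (Function.update p 0 u) : ℝ)
      = threshold c (suCount c (Function.update p 0 0))
          / (suCount c (Function.update p 0 0) : ℝ) := by
  have hc_nonneg : ∀ k, 0 ≤ c k := fun k => hc0.le.trans (hmono (Fin.zero_le k))
  have hc_le_one : ∀ k, c k ≤ 1 := fun k => (hmono (Fin.le_last k)).trans hc1.le
  set p₀ := Function.update p 0 0
  have hintegrand : Set.EqOn
      (fun u => (if u ≤ threshold c (suCount c (Function.update p 0 u)) then (1 : ℝ) else 0)
          / (suCount c (Function.update p 0 u) : ℝ))
      ((Set.Iic (threshold c (suCount c p₀))).indicator fun _ => (suCount c p₀ : ℝ)⁻¹)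
      (Set.Icc 0 1) := fun u hu => by
    dsimp only
    rw [← Function.update_idem (0 : ℝ) u p]
    exact suCount_update_integrand_eq hmono hc_nonneg p₀ 0 (by simpa [p₀] using hu.1)
  rw [setIntegral_congr_fun measurableSet_Icc hintegrand,
    setIntegral_Icc_indicator_Iic_const (threshold_nonneg hc_nonneg _)
      (threshold_le_one hc_le_one _), div_eq_mul_inv]

/-- The leave-one-out integral identity for step-up tests:
`∫_0^1 1{p_1 ≤ α_{R:n}} / R dp_1 = α_{R(p⁽¹⁾):n} / R(p⁽¹⁾)`. -/
theorem stepUp_leave_one_out_integral {m : ℕ} (c : Fin (m + 1) → ℝ) (hmono : Monotone c)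
    (hc0 : 0 < c 0) (hc1 : c (Fin.last m) < 1)
    (p : Fin (m + 1) → ℝ) (hp : ∀ i, p i ∈ Set.Icc (0 : ℝ) 1) :
    ∫ u in Set.Icc (0 : ℝ) 1,
        (if u ≤ threshold c (suCount c (Function.update p 0 u)) then (1 : ℝ) else 0)
          / (suCount c (Function.update p 0 u) : ℝ)
      = threshold c (suCount c (Function.update p 0 0))
          / (suCount c (Function.update p 0 0) : ℝ) :=
  stepUp_leave_one_out_integral_general c hmono hc0 hc1 p
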